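/- Let K be a field, R = K[[x_1,…,x_s]], A, B ∈ M_{m,n}, and suppose B = U·φ(A)·V for some U ∈ GL(m,R), V ∈ GL(n,R), and K-algebra automorphism φ of R. Then the extended tangent images satisfy T̃^e_B(G_lr B) = U·φ(T̃^e_A(G_lr A))·V, i.e. T̃^e_B(G_lr B) is the image of T̃^e_A(G_lr A) under the map X ↦ U·φ(X)·V. The same equality holds for the (non-extended) tangent images T̃_B(G_lr B) = U·φ(T̃_A(G_lr A))·V. -/

import Mathlib

/- STATEMENT 7: If B = U·φ(A)·V with U ∈ GL(m,R), V ∈ GL(n,R) and φ a K-algebra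
automorphism of R = K[[x_1,…,x_s]], then T̃^e_B(G_lr B) = U·φ(T̃^e_A(G_lr A))·V and
T̃_B(G_lr B) = U·φ(T̃_A(G_lr A))·V, where the right-hand sides are the images of the
tangent images of A under the map X ↦ U·φ(X)·V. -/

open MvPowerSeries IsLocalRing

noncomputable section

/-- The formal partial derivative ∂f/∂x_ν of a formal power series. -/
def pderiv {K : Type*} [Field K] {s : ℕ} (ν : Fin s) (f : MvPowerSeries (Fin s) K) :
    MvPowerSeries (Fin s) K :=
  fun e => ((e ν + 1 : ℕ) : K) * MvPowerSeries.coeff (R := K) (e + Finsupp.single ν 1) f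

/-- The tangent image T̃_A(G_lr A) = ⟨E_{m,pq}·A⟩ + ⟨A·E_{n,hl}⟩ + m·⟨∂A/∂x_ν⟩. -/
def Tlr {K : Type*} [Field K] {s m n : ℕ} (A : Matrix (Fin m) (Fin n) (MvPowerSeries (Fin s) K)) :
    Submodule (MvPowerSeries (Fin s) K) (Matrix (Fin m) (Fin n) (MvPowerSeries (Fin s) K)) :=
  Submodule.span _
      ((Set.range fun pq : Fin m × Fin m =>
          Matrix.single pq.1 pq.2 (1 : MvPowerSeries (Fin s) K) * A)
        ∪ (Set.range fun hl : Fin n × Fin n =>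
          A * Matrix.single hl.1 hl.2 (1 : MvPowerSeries (Fin s) K)))
    ⊔ (maximalIdeal (MvPowerSeries (Fin s) K)) •
        Submodule.span _ (Set.range fun ν : Fin s => A.map (pderiv ν))

/-- The extended tangent image T̃^e_A(G_lr A) = ⟨E_{m,pq}·A⟩ + ⟨A·E_{n,hl}⟩ + ⟨∂A/∂x_ν⟩. -/
def Tlre {K : Type*} [Field K] {s m n : ℕ}
    (A : Matrix (Fin m) (Fin n) (MvPowerSeries (Fin s) K)) :
    Submodule (MvPowerSeries (Fin s) K) (Matrix (Fin m) (Fin n) (MvPowerSeries (Fin s) K)) :=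
  Submodule.span _
      ((Set.range fun pq : Fin m × Fin m =>
          Matrix.single pq.1 pq.2 (1 : MvPowerSeries (Fin s) K) * A)
        ∪ (Set.range fun hl : Fin n × Fin n =>
          A * Matrix.single hl.1 hl.2 (1 : MvPowerSeries (Fin s) K)))
    ⊔ Submodule.span _ (Set.range fun ν : Fin s => A.map (pderiv ν))

/-!
The generators of both tangent images are left multiples `W * A`, right multiples `A * W` and
(ideal multiples of) the partial derivatives `∂A/∂x_ν`. Write `B = U φ(A) V`. Left and right
multiples of `B` are images of left and right multiples of `A`. For the derivatives, the Leibniz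
rule and the chain rule `∂_ν(φ f) = ∑_μ ∂_ν(φ x_μ) φ(∂_μ f)` give
`∂_ν B = (∂_ν U) U⁻¹ B + ∑_μ ∂_ν(φ x_μ) U φ(∂_μ A) V + B V⁻¹ (∂_ν V)`,
so the tangent image of `B` lies in the image of that of `A`. Equality follows by applying this to
the inverse transformation, which has the same shape. Since `φ` preserves the maximal ideal, the
argument is the same for `T̃` and `T̃^e`.

The chain rule holds because a `K`-derivation of `K[[x]]` is determined by its values on the
variables: if `D` kills every `x_μ`, then writing `f = f(0) + ∑_μ x_μ g_μ` shows inductively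
that `D f ∈ m^k` for every `k`, and `⋂_k m^k = 0` by Krull's intersection theorem.
-/

namespace MvPowerSeries

theorem sub_C_constantCoeff_mem_span_X {R : Type*} [CommRing R] {s : ℕ}
    (f : MvPowerSeries (Fin s) R) :
    f - C (constantCoeff f) ∈ Ideal.span (Set.range (X : Fin s → MvPowerSeries (Fin s) R)) := by
  classical
  -- Each nonzero exponent `d` is assigned to the smallest variable occurring in it.
  let r (μ : Fin s) : MvPowerSeries (Fin s) R :=
    fun d => if d.support.min = μ then coeff d f else 0
  have hr : ∀ μ d, coeff d (r μ) = if d.support.min = μ then coeff d f else 0 := fun _ _ => rfl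
  have hsum : f - C (constantCoeff f) = ∑ μ, r μ := by
    ext d
    simp only [map_sub, map_sum, hr, coeff_C]
    rcases d.support.eq_empty_or_nonempty with hd | hd
    · rw [Finsupp.support_eq_empty.1 hd]
      simp
    · obtain ⟨μ, hμ⟩ := Finset.min_of_nonempty hd
      simp [hμ, Finsupp.support_nonempty_iff.1 hd]
  rw [hsum]
  refine Ideal.sum_mem _ fun μ _ => ?_
  obtain ⟨g, hg⟩ : X μ ∣ r μ := X_dvd_iff.2 fun d hd => by
    rw [hr, if_neg]
    exact fun h => Finsupp.mem_support_iff.1 (Finset.mem_of_min h) hd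
  rw [hg]
  exact Ideal.mul_mem_right _ _ (Ideal.subset_span ⟨μ, rfl⟩)

variable {K : Type*} [Field K] {s : ℕ}

theorem X_mem_maximalIdeal (μ : Fin s) : X μ ∈ maximalIdeal (MvPowerSeries (Fin s) K) := by
  simp [mem_maximalIdeal, isUnit_iff_constantCoeff]

theorem derivation_eq_zero_of_forall_X
    {D : Derivation K (MvPowerSeries (Fin s) K) (MvPowerSeries (Fin s) K)}
    (hD : ∀ μ, D (X μ) = 0) : D = 0 := by
  have hpow : ∀ k f, D f ∈ maximalIdeal (MvPowerSeries (Fin s) K) ^ k := by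
    intro k
    induction k with
    | zero => simp
    | succ k ih =>
      intro f
      obtain ⟨g, hg⟩ := Ideal.mem_span_range_iff_exists_fun.1 (sub_C_constantCoeff_mem_span_X f)
      have hf : f = algebraMap K _ (constantCoeff f) + ∑ μ, g μ * X μ := by
        rw [hg, ← c_eq_algebraMap]
        ring
      rw [hf, map_add, D.map_algebraMap, zero_add, map_sum, pow_succ']
      refine Ideal.sum_mem _ fun μ _ => ?_
      rw [D.leibniz, hD, smul_zero, zero_add, smul_eq_mul]
      exact Ideal.mul_mem_mul (X_mem_maximalIdeal μ) (ih _)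
  refine Derivation.ext fun f => ?_
  have krull := Ideal.iInf_pow_eq_bot_of_isLocalRing
    (maximalIdeal (MvPowerSeries (Fin s) K)) Ideal.IsPrime.ne_top'
  rw [Derivation.zero_apply, ← Ideal.mem_bot, ← krull, Ideal.mem_iInf]
  exact (hpow · f)

theorem derivation_apply_eq_sum_pderiv
    (D : Derivation K (MvPowerSeries (Fin s) K) (MvPowerSeries (Fin s) K))
    (f : MvPowerSeries (Fin s) K) : D f = ∑ μ, D (X μ) * pderiv K μ f := by
  classical
  have hsum : ∀ g, (∑ μ, D (X μ) • pderiv K μ) g = ∑ μ, D (X μ) * pderiv K μ g := by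
    intro g
    rw [← Derivation.coeFnAddMonoidHom_apply, map_sum, Finset.sum_apply]
    rfl
  have h := derivation_eq_zero_of_forall_X (D := D - ∑ μ, D (X μ) • pderiv K μ) fun ν => by
    simp [hsum, pderiv_X, Pi.single_apply]
  conv_lhs => rw [sub_eq_zero.1 h]
  exact hsum f

theorem pderiv_algEquiv_apply (φ : MvPowerSeries (Fin s) K ≃ₐ[K] MvPowerSeries (Fin s) K)
    (ν : Fin s) (f : MvPowerSeries (Fin s) K) :
    pderiv K ν (φ f) = ∑ μ, pderiv K ν (φ (X μ)) * φ (pderiv K μ f) := by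
  let D := (pderiv K ν).liftOfSurjective φ.symm.surjective fun g hg => by
    rw [(map_eq_zero_iff _ φ.symm.injective).1 hg, map_zero, map_zero]
  have hD : ∀ g, D g = φ.symm (pderiv K ν (φ g)) := fun g => by
    simpa using Derivation.liftOfSurjective_apply φ.symm.surjective _ (φ g)
  have := congrArg φ (hD f)
  rw [derivation_apply_eq_sum_pderiv D] at this
  simpa [hD, map_sum] using this.symm

theorem map_pderiv_map_algEquiv {m n : Type*}
    (φ : MvPowerSeries (Fin s) K ≃ₐ[K] MvPowerSeries (Fin s) K) (ν : Fin s)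
    (A : Matrix m n (MvPowerSeries (Fin s) K)) :
    (A.map φ).map (pderiv K ν) =
      ∑ μ, pderiv K ν (φ (X μ)) • (A.map (pderiv K μ)).map φ := by
  ext i j
  rw [Matrix.map_apply, Matrix.map_apply, pderiv_algEquiv_apply, Matrix.sum_apply]
  simp

end MvPowerSeries

theorem pderiv_eq_mvPowerSeries_pderiv {K : Type*} [Field K] {s : ℕ} (ν : Fin s) :
    pderiv ν = ⇑(MvPowerSeries.pderiv K ν : Derivation K (MvPowerSeries (Fin s) K) _) := by
  funext f
  ext e
  rw [MvPowerSeries.coeff_pderiv, mul_comm, MvPowerSeries.coeff_apply, _root_.pderiv]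
  push_cast
  rfl

theorem Derivation.map_matrix_mul {K R l m n : Type*} [CommSemiring K] [CommSemiring R]
    [Algebra K R] [Fintype m] (D : Derivation K R R) (M : Matrix l m R) (N : Matrix m n R) :
    (M * N).map D = M.map D * N + M * N.map D := by
  ext i j
  simp [Matrix.mul_apply, Finset.sum_add_distrib, add_comm, mul_comm]

section Matrices

variable {K R : Type*} [CommSemiring K] [CommSemiring R] [Algebra K R]
  {m n : Type*} [Fintype m] [Fintype n] [DecidableEq m] [DecidableEq n]

@[simp]
theorem Matrix.coe_units_mul_inv_cancel_left {l : Type*} (U : (Matrix m m R)ˣ) (X : Matrix m l R) :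
    (U : Matrix m m R) * ((↑U⁻¹ : Matrix m m R) * X) = X := by
  rw [← Matrix.mul_assoc, U.mul_inv, Matrix.one_mul]

@[simp]
theorem Matrix.coe_units_inv_mul_cancel_left {l : Type*} (U : (Matrix m m R)ˣ) (X : Matrix m l R) :
    (↑U⁻¹ : Matrix m m R) * ((U : Matrix m m R) * X) = X := by
  rw [← Matrix.mul_assoc, U.inv_mul, Matrix.one_mul]

def leftRightSpan (A : Matrix m n R) : Submodule R (Matrix m n R) :=
  Submodule.span R ((Set.range fun pq : m × m => Matrix.single pq.1 pq.2 (1 : R) * A)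
    ∪ Set.range fun hl : n × n => A * Matrix.single hl.1 hl.2 (1 : R))

theorem mem_leftRightSpan {A X : Matrix m n R} :
    X ∈ leftRightSpan A ↔ ∃ (W : Matrix m m R) (W' : Matrix n n R), W * A + A * W' = X := by
  constructor
  · intro hX
    induction hX using Submodule.span_induction with
    | mem X hX =>
      rcases hX with ⟨⟨p, q⟩, rfl⟩ | ⟨⟨h, l⟩, rfl⟩
      · exact ⟨Matrix.single p q 1, 0, by simp⟩
      · exact ⟨0, Matrix.single h l 1, by simp⟩
    | zero => exact ⟨0, 0, by simp⟩
    | add X Y _ _ hX hY =>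
      obtain ⟨W₁, W₁', rfl⟩ := hX
      obtain ⟨W₂, W₂', rfl⟩ := hY
      exact ⟨W₁ + W₂, W₁' + W₂', by simp only [Matrix.add_mul, Matrix.mul_add]; abel⟩
    | smul r X _ hX =>
      obtain ⟨W, W', rfl⟩ := hX
      exact ⟨r • W, r • W', by simp [smul_add, Matrix.smul_mul, Matrix.mul_smul]⟩
  · rintro ⟨W, W', rfl⟩
    refine add_mem ?_ ?_
    · rw [Matrix.matrix_eq_sum_single W, Matrix.sum_mul]
      refine sum_mem fun p _ => ?_
      rw [Matrix.sum_mul]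
      refine sum_mem fun q _ => ?_
      rw [← mul_one (W p q), ← smul_eq_mul, ← Matrix.smul_single, Matrix.smul_mul]
      exact Submodule.smul_mem _ _ (Submodule.subset_span (Or.inl ⟨(p, q), rfl⟩))
    · rw [Matrix.matrix_eq_sum_single W', Matrix.mul_sum]
      refine sum_mem fun h _ => ?_
      rw [Matrix.mul_sum]
      refine sum_mem fun l _ => ?_
      rw [← mul_one (W' h l), ← smul_eq_mul, ← Matrix.smul_single, Matrix.mul_smul]
      exact Submodule.smul_mem _ _ (Submodule.subset_span (Or.inr ⟨(h, l), rfl⟩))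

def unitsMapSymmInv (φ : R ≃ₐ[K] R) (U : (Matrix m m R)ˣ) : (Matrix m m R)ˣ :=
  Units.map (φ.symm.mapMatrix (m := m) : Matrix m m R →* Matrix m m R) U⁻¹

@[simp]
theorem coe_unitsMapSymmInv (φ : R ≃ₐ[K] R) (U : (Matrix m m R)ˣ) :
    (unitsMapSymmInv φ U : Matrix m m R) = (↑U⁻¹ : Matrix m m R).map φ.symm :=
  rfl

variable (U : (Matrix m m R)ˣ) (V : (Matrix n n R)ˣ) (φ : R ≃ₐ[K] R)

def leftRightAct :
    Matrix m n R →ₛₗ[(φ.toRingEquiv : R →+* R)] Matrix m n R where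
  toFun X := (U : Matrix m m R) * X.map φ * (V : Matrix n n R)
  map_add' X Y := by rw [Matrix.map_add _ (map_add φ), Matrix.mul_add, Matrix.add_mul]
  map_smul' r X := by
    rw [Matrix.map_smulₛₗ _ φ r fun a => by simp]
    simp [Matrix.mul_smul, Matrix.smul_mul]

@[simp]
theorem leftRightAct_apply (X : Matrix m n R) :
    leftRightAct U V φ X = (U : Matrix m m R) * X.map φ * (V : Matrix n n R) :=
  rfl

theorem leftRightAct_inv_leftRightAct (X : Matrix m n R) :
    leftRightAct (unitsMapSymmInv φ U) (unitsMapSymmInv φ V) φ.symm (leftRightAct U V φ X) =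
      X := by
  simp only [leftRightAct_apply, coe_unitsMapSymmInv]
  rw [← Matrix.map_mul, ← Matrix.map_mul]
  simp [Matrix.map_map, Function.comp_def, Matrix.mul_assoc]

theorem leftRightAct_leftRightAct_inv (X : Matrix m n R) :
    leftRightAct U V φ (leftRightAct (unitsMapSymmInv φ U) (unitsMapSymmInv φ V) φ.symm X) =
      X := by
  simp only [leftRightAct_apply, coe_unitsMapSymmInv]
  simp [Matrix.map_map, Function.comp_def, Matrix.mul_assoc]

theorem leftRightSpan_leftRightAct_le (A : Matrix m n R) :
    leftRightSpan (leftRightAct U V φ A) ≤ (leftRightSpan A).map (leftRightAct U V φ) := by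
  intro X hX
  obtain ⟨W, W', rfl⟩ := mem_leftRightSpan.1 hX
  refine ⟨((↑U⁻¹ : Matrix m m R) * W * U).map φ.symm * A
      + A * ((V : Matrix n n R) * W' * (↑V⁻¹ : Matrix n n R)).map φ.symm,
    mem_leftRightSpan.2 ⟨_, _, rfl⟩, ?_⟩
  simp only [map_add, leftRightAct_apply]
  simp [Matrix.map_map, Function.comp_def, Matrix.mul_assoc]

end Matrices

section TangentImage

variable {K : Type*} [Field K] {s : ℕ} {m n : Type*} [Fintype m] [Fintype n]
  [DecidableEq m] [DecidableEq n]

local notation "R" => MvPowerSeries (Fin s) K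

def tangentImage (I : Ideal R) (A : Matrix m n R) : Submodule R (Matrix m n R) :=
  leftRightSpan A ⊔ I • Submodule.span R (Set.range fun ν => A.map (MvPowerSeries.pderiv K ν))

theorem Tlr_eq_tangentImage {m n : ℕ} (A : Matrix (Fin m) (Fin n) R) :
    Tlr A = tangentImage (maximalIdeal R) A := by
  simp only [Tlr, tangentImage, leftRightSpan, pderiv_eq_mvPowerSeries_pderiv]

theorem Tlre_eq_tangentImage {m n : ℕ} (A : Matrix (Fin m) (Fin n) R) :
    Tlre A = tangentImage ⊤ A := by
  simp only [Tlre, tangentImage, leftRightSpan, pderiv_eq_mvPowerSeries_pderiv, Submodule.top_smul]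

variable (U : (Matrix m m (MvPowerSeries (Fin s) K))ˣ)
  (V : (Matrix n n (MvPowerSeries (Fin s) K))ˣ)
  (φ : MvPowerSeries (Fin s) K ≃ₐ[K] MvPowerSeries (Fin s) K)

theorem map_pderiv_leftRightAct (ν : Fin s) (A : Matrix m n R) :
    (leftRightAct U V φ A).map (MvPowerSeries.pderiv K ν) =
      (U : Matrix m m R).map (MvPowerSeries.pderiv K ν) * (↑U⁻¹ : Matrix m m R) *
          leftRightAct U V φ A
        + ∑ μ, MvPowerSeries.pderiv K ν (φ (X μ)) •
            leftRightAct U V φ (A.map (MvPowerSeries.pderiv K μ))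
        + leftRightAct U V φ A *
          ((↑V⁻¹ : Matrix n n R) * (V : Matrix n n R).map (MvPowerSeries.pderiv K ν)) := by
  simp only [leftRightAct_apply, Derivation.map_matrix_mul, MvPowerSeries.map_pderiv_map_algEquiv,
    Matrix.mul_sum, Matrix.sum_mul, Matrix.mul_smul, Matrix.smul_mul, Matrix.mul_add,
    Matrix.mul_assoc, Matrix.coe_units_inv_mul_cancel_left, Matrix.coe_units_mul_inv_cancel_left,
    add_assoc]

theorem tangentImage_leftRightAct_le (I : Ideal R) (hI : ∀ r ∈ I, φ.symm r ∈ I)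
    (A : Matrix m n R) :
    tangentImage I (leftRightAct U V φ A) ≤ (tangentImage I A).map (leftRightAct U V φ) := by
  have hLR :
      leftRightSpan (leftRightAct U V φ A) ≤ (tangentImage I A).map (leftRightAct U V φ) :=
    (leftRightSpan_leftRightAct_le U V φ A).trans (Submodule.map_mono le_sup_left)
  refine sup_le hLR ?_
  have hspan := Submodule.span_smul_span (I : Set R)
    (Set.range fun ν => (leftRightAct U V φ A).map (MvPowerSeries.pderiv K ν))
  rw [I.span_eq] at hspan
  rw [hspan, Submodule.span_le]
  rintro _ ⟨r, hr, _, ⟨ν, rfl⟩, rfl⟩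
  rw [SetLike.mem_coe]
  beta_reduce
  rw [map_pderiv_leftRightAct, smul_add, smul_add, Finset.smul_sum]
  refine add_mem (add_mem ?_ (sum_mem fun μ _ => ?_)) ?_
  · exact Submodule.smul_mem _ r
      (hLR (mem_leftRightSpan.2 ⟨_, 0, by rw [Matrix.mul_zero, add_zero]⟩))
  · refine ⟨φ.symm (r * MvPowerSeries.pderiv K ν (φ (X μ))) •
      A.map (MvPowerSeries.pderiv K μ), Submodule.mem_sup_right (Submodule.smul_mem_smul
        (hI _ (I.mul_mem_right _ hr)) (Submodule.subset_span ⟨μ, rfl⟩)), ?_⟩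
    rw [LinearMap.map_smulₛₗ, smul_smul]
    simp
  · exact Submodule.smul_mem _ r
      (hLR (mem_leftRightSpan.2 ⟨0, _, by rw [Matrix.zero_mul, zero_add]⟩))

theorem tangentImage_leftRightAct (I : Ideal R)
    (hI : ∀ (ψ : R ≃ₐ[K] R), ∀ r ∈ I, ψ r ∈ I) (A : Matrix m n R) :
    tangentImage I (leftRightAct U V φ A) = (tangentImage I A).map (leftRightAct U V φ) := by
  refine le_antisymm (tangentImage_leftRightAct_le U V φ I (hI φ.symm) A) ?_
  rintro _ ⟨Y, hY, rfl⟩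
  have hinv := tangentImage_leftRightAct_le (unitsMapSymmInv φ U) (unitsMapSymmInv φ V) φ.symm I
    (by simpa using hI φ) (leftRightAct U V φ A)
  rw [leftRightAct_inv_leftRightAct] at hinv
  obtain ⟨Z, hZ, rfl⟩ := hinv hY
  rwa [leftRightAct_leftRightAct_inv]

end TangentImage

theorem tangent_image_transformation {K : Type*} [Field K] {s m n : ℕ}
    (A B : Matrix (Fin m) (Fin n) (MvPowerSeries (Fin s) K))
    (U : (Matrix (Fin m) (Fin m) (MvPowerSeries (Fin s) K))ˣ)
    (V : (Matrix (Fin n) (Fin n) (MvPowerSeries (Fin s) K))ˣ)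
    (φ : MvPowerSeries (Fin s) K ≃ₐ[K] MvPowerSeries (Fin s) K)
    (hB : B = (U : Matrix (Fin m) (Fin m) (MvPowerSeries (Fin s) K)) * (A.map φ) *
      (V : Matrix (Fin n) (Fin n) (MvPowerSeries (Fin s) K))) :
    SetLike.coe (Tlre B) =
      (fun X : Matrix (Fin m) (Fin n) (MvPowerSeries (Fin s) K) =>
        (U : Matrix (Fin m) (Fin m) (MvPowerSeries (Fin s) K)) * (X.map φ) *
          (V : Matrix (Fin n) (Fin n) (MvPowerSeries (Fin s) K))) '' SetLike.coe (Tlre A) ∧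
    SetLike.coe (Tlr B) =
      (fun X : Matrix (Fin m) (Fin n) (MvPowerSeries (Fin s) K) =>
        (U : Matrix (Fin m) (Fin m) (MvPowerSeries (Fin s) K)) * (X.map φ) *
          (V : Matrix (Fin n) (Fin n) (MvPowerSeries (Fin s) K))) '' SetLike.coe (Tlr A) := by
  have hB' : B = leftRightAct U V φ A := hB
  have hmax : ∀ (ψ : MvPowerSeries (Fin s) K ≃ₐ[K] MvPowerSeries (Fin s) K),
      ∀ r ∈ maximalIdeal (MvPowerSeries (Fin s) K), ψ r ∈ maximalIdeal _ := fun ψ r hr => by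
    simpa [mem_maximalIdeal, mem_nonunits_iff] using hr
  rw [Tlre_eq_tangentImage, Tlre_eq_tangentImage, Tlr_eq_tangentImage, Tlr_eq_tangentImage, hB',
    tangentImage_leftRightAct U V φ ⊤ (fun _ _ _ => Submodule.mem_top) A,
    tangentImage_leftRightAct U V φ _ hmax A, Submodule.map_coe, Submodule.map_coe]
  exact ⟨rfl, rfl⟩
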